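/- arXiv:2306.02391 — 8 statements merged into one kernel-verified Lean document; each statement's English description precedes it below -/
import Mathlib

section
/- dim S(X,G,P) = Σ_{i=1}^m dim P_i if and only if for every pair (i,j) with i ≠ j and X_i ∩ X_j ≠ ∅, the restriction of P_i to X_i ∩ X_j is the zero space. -/
open Module

/-- The space of overlap splines: tuples of patches `p i ∈ P i` (functions on `Gs i`)
that agree at every point of `X` lying in two pieces. -/
def splineSpace {G : Type*} {ι : Type*} (X : Finset G) (Gs : ι → Set G)
    (P : ∀ i, Submodule ℝ (↥(Gs i) → ℝ)) :
    Submodule ℝ (∀ i, ↥(Gs i) → ℝ) where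
  carrier := {p | (∀ i, p i ∈ P i) ∧
    ∀ i j, ∀ x ∈ X, ∀ (hi : x ∈ Gs i) (hj : x ∈ Gs j),
      p i ⟨x, hi⟩ = p j ⟨x, hj⟩}
  add_mem' := by
    rintro p q ⟨hp1, hp2⟩ ⟨hq1, hq2⟩
    exact ⟨fun i => (P i).add_mem (hp1 i) (hq1 i),
      fun i j x hx hi hj => by
        simp only [Pi.add_apply]
        rw [hp2 i j x hx hi hj, hq2 i j x hx hi hj]⟩
  zero_mem' := ⟨fun i => (P i).zero_mem, fun i j x hx hi hj => rfl⟩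
  smul_mem' := by
    rintro c p ⟨hp1, hp2⟩
    exact ⟨fun i => (P i).smul_mem c (hp1 i),
      fun i j x hx hi hj => by
        simp only [Pi.smul_apply]
        rw [hp2 i j x hx hi hj]⟩


private def piSubEquiv {ι : Type*} [Fintype ι] {φ : ι → Type*} [∀ i, AddCommGroup (φ i)]
    [∀ i, Module ℝ (φ i)] (P : ∀ i, Submodule ℝ (φ i)) :
    (Submodule.pi Set.univ P) ≃ₗ[ℝ] ∀ i, P i where
  toFun q := fun i => ⟨q.1 i, q.2 i trivial⟩
  map_add' _ _ := rfl
  map_smul' _ _ := rfl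
  invFun f := ⟨fun i => f i, fun i _ => (f i).2⟩
  left_inv _ := rfl
  right_inv _ := rfl

/-- dim S(X,𝒢,𝒫) = ∑ᵢ dim Pᵢ iff Pᵢ|_{Xᵢ ∩ Xⱼ} = {0} for all pairs i ≠ j with
Xᵢ ∩ Xⱼ ≠ ∅. -/
theorem splineSpace_finrank_eq_sum_iff {G : Type*} {m : ℕ} (X : Finset G)
    (Gs : Fin m → Set G) (hcover : (⋃ i, Gs i) = Set.univ)
    (P : ∀ i, Submodule ℝ (↥(Gs i) → ℝ)) [∀ i, FiniteDimensional ℝ (P i)] :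
    Module.finrank ℝ (splineSpace X Gs P) = ∑ i, Module.finrank ℝ (P i) ↔
      ∀ i j, i ≠ j → ((X : Set G) ∩ Gs i ∩ Gs j).Nonempty →
        ∀ p ∈ P i, ∀ x (_ : x ∈ X) (hi : x ∈ Gs i), x ∈ Gs j → p ⟨x, hi⟩ = 0 := by
  classical
  set S := splineSpace X Gs P with hS
  set Q := Submodule.pi Set.univ P with hQdef
  have hQfd : FiniteDimensional ℝ Q := (piSubEquiv P).symm.finiteDimensional
  have hQ : finrank ℝ Q = ∑ i, finrank ℝ (P i) := by
    rw [(piSubEquiv P).finrank_eq, finrank_pi_fintype]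
  have hle : S ≤ Q := fun p hp i _ => hp.1 i
  constructor
  · intro h i j hij hne p hp x hx hi hj
    by_contra hpx
    have hq : Pi.single i p ∈ Q := by
      intro k _
      by_cases hk : k = i
      · subst hk; simpa using hp
      · simpa [Pi.single_eq_of_ne hk] using (P k).zero_mem
    have hns : Pi.single i p ∉ S := by
      rintro ⟨-, h2⟩
      have := h2 i j x hx hi hj
      rw [Pi.single_eq_same, Pi.single_eq_of_ne (Ne.symm hij)] at this
      exact hpx this
    have hlt : S < Q := lt_of_le_of_ne hle (fun he => hns (he ▸ hq))
    have := Submodule.finrank_lt_finrank_of_lt hlt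
    omega
  · intro h
    have heq : S = Q := by
      refine le_antisymm hle fun p hp => ⟨fun i => hp i trivial, ?_⟩
      intro i j x hx hi hj
      by_cases hij : i = j
      · subst hij; rfl
      · rw [h i j hij ⟨x, ⟨by simpa using hx, hi⟩, hj⟩ (p i) (hp i trivial) x hx hi hj,
          h j i (Ne.symm hij) ⟨x, ⟨by simpa using hx, hj⟩, hi⟩ (p j) (hp j trivial) x hx hj hi]
    rw [show Module.finrank ℝ S = finrank ℝ Q from heq ▸ rfl, hQ]
end

section
/- The dimension of the overlap spline space satisfies the lower bound dim S(X,G,P) ≥ |X| + Σ_{i=1}^m dim P_i − Σ_{i=1}^m |X_i|. -/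
open Module

section Aux

variable {G : Type*} {m : ℕ} (X : Finset G) (Gs : Fin m → Set G)
  (P : ∀ i, Submodule ℝ (↥(Gs i) → ℝ))

/-- evaluation-difference map -/
noncomputable def splineT :
    ((∀ i, P i) × (↥X → ℝ)) →ₗ[ℝ] (∀ i, ↥((X : Set G) ∩ Gs i) → ℝ) where
  toFun pf := fun i x => (pf.1 i : ↥(Gs i) → ℝ) ⟨x, x.2.2⟩ - pf.2 ⟨x, x.2.1⟩
  map_add' p q := by
    funext i x
    simp [add_sub_add_comm]
  map_smul' c p := by
    funext i x
    simp [mul_sub]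

noncomputable def splinePhi :
    LinearMap.ker (splineT X Gs P) →ₗ[ℝ] splineSpace X Gs P where
  toFun v := ⟨fun i => (v.1.1 i : ↥(Gs i) → ℝ), by
    constructor
    · exact fun i => (v.1.1 i).2
    · intro i j x hx hi hj
      have hker := v.2
      rw [LinearMap.mem_ker] at hker
      have h1 := congrFun (congrFun hker i) ⟨x, ⟨hx, hi⟩⟩
      have h2 := congrFun (congrFun hker j) ⟨x, ⟨hx, hj⟩⟩
      simp only [splineT, LinearMap.coe_mk, AddHom.coe_mk, Pi.zero_apply,
        sub_eq_zero] at h1 h2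
      exact h1.trans h2.symm⟩
  map_add' v w := rfl
  map_smul' c v := rfl

theorem splinePhi_bijective (hcover : (⋃ i, Gs i) = Set.univ) :
    Function.Bijective (splinePhi X Gs P) := by
  have hex : ∀ x : G, ∃ i, x ∈ Gs i := fun x =>
    Set.mem_iUnion.mp (hcover ▸ Set.mem_univ x)
  choose idx hidx using hex
  constructor
  · intro v w h
    have h' : ∀ i, (v.1.1 i : ↥(Gs i) → ℝ) = (w.1.1 i : ↥(Gs i) → ℝ) :=
      fun i => congrFun (congrArg Subtype.val h) i
    have hv := v.2; have hw := w.2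
    rw [LinearMap.mem_ker] at hv hw
    have hfst : v.1.1 = w.1.1 := funext fun i => Subtype.ext (h' i)
    have hsnd : v.1.2 = w.1.2 := by
      funext y
      rcases y with ⟨x, hxX⟩
      have h1 := congrFun (congrFun hv (idx x)) ⟨x, ⟨hxX, hidx x⟩⟩
      have h2 := congrFun (congrFun hw (idx x)) ⟨x, ⟨hxX, hidx x⟩⟩
      simp only [splineT, LinearMap.coe_mk, AddHom.coe_mk, Pi.zero_apply,
        sub_eq_zero] at h1 h2
      rw [← h1, ← h2]
      exact congrFun (h' (idx x)) _
    exact Subtype.ext (Prod.ext hfst hsnd)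
  · rintro ⟨q, hq1, hq2⟩
    refine ⟨⟨(fun i => ⟨q i, hq1 i⟩, fun y => q (idx y) ⟨y, hidx y⟩), ?_⟩, rfl⟩
    rw [LinearMap.mem_ker]
    funext i x
    simp only [splineT, LinearMap.coe_mk, AddHom.coe_mk, Pi.zero_apply, sub_eq_zero]
    exact hq2 i (idx x) x x.2.1 x.2.2 (hidx x)

set_option synthInstance.maxHeartbeats 1000000 in
theorem splineSpace_finrank_ker_eq (hcover : (⋃ i, Gs i) = Set.univ) :
    Module.finrank ℝ (LinearMap.ker (splineT X Gs P))
      = Module.finrank ℝ (splineSpace X Gs P) :=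
  (LinearEquiv.ofBijective (splinePhi X Gs P)
    (splinePhi_bijective X Gs P hcover)).finrank_eq

end Aux


/-- dim S(X,𝒢,𝒫) ≥ |X| + ∑ᵢ dim Pᵢ − ∑ᵢ |Xᵢ|. -/
theorem splineSpace_finrank_lower_bound {G : Type*} {m : ℕ} (X : Finset G)
    (Gs : Fin m → Set G) (hcover : (⋃ i, Gs i) = Set.univ)
    (P : ∀ i, Submodule ℝ (↥(Gs i) → ℝ)) [∀ i, FiniteDimensional ℝ (P i)] :
    (X.card : ℤ) + ∑ i, (Module.finrank ℝ (P i) : ℤ)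
        - ∑ i, (((X : Set G) ∩ Gs i).ncard : ℤ)
      ≤ (Module.finrank ℝ (splineSpace X Gs P) : ℤ) := by
  classical
  haveI : ∀ i, Fintype ↥((X : Set G) ∩ Gs i) := fun i =>
    (X.finite_toSet.inter_of_left (Gs i)).fintype
  set T := splineT X Gs P with hT
  have hdim : finrank ℝ (LinearMap.ker T) = finrank ℝ (splineSpace X Gs P) :=
    splineSpace_finrank_ker_eq X Gs P hcover
  have hrn := LinearMap.finrank_range_add_finrank_ker T
  have hle : finrank ℝ (LinearMap.range T)
      ≤ finrank ℝ (∀ i, ↥((X : Set G) ∩ Gs i) → ℝ) :=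
    Submodule.finrank_le _
  have hV : finrank ℝ ((∀ i, P i) × (↥X → ℝ))
      = (∑ i, finrank ℝ (P i)) + X.card := by
    rw [Module.finrank_prod, Module.finrank_pi_fintype]
    congr 1
    rw [Module.finrank_pi]
    exact Fintype.card_coe X
  have hW : finrank ℝ (∀ i, ↥((X : Set G) ∩ Gs i) → ℝ)
      = ∑ i, ((X : Set G) ∩ Gs i).ncard := by
    rw [Module.finrank_pi_fintype]
    refine Finset.sum_congr rfl fun i _ => ?_
    rw [Module.finrank_pi, ← Nat.card_eq_fintype_card, Nat.card_coe_set_eq]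
  have key : (∑ i, finrank ℝ (P i)) + X.card
      ≤ (∑ i, ((X : Set G) ∩ Gs i).ncard) + finrank ℝ (splineSpace X Gs P) := by
    rw [← hV, ← hW, ← hdim, ← hrn]
    omega
  zify at key
  omega
end

section
/- If each X_i is unisolvent for P_i (i.e., p ∈ P_i and p|_{X_i} = 0 imply p = 0), then the restriction map T : S(X,G,P) → R^N, sending an overlap spline s to its well-defined vector of values at the points of X, is injective; in particular dim S(X,G,P) ≤ |X| = N. -/
open Module

/-- If each Xᵢ = X ∩ Gᵢ is unisolvent for Pᵢ, the restriction map
s ↦ s|_X is injective; in particular dim S(X,𝒢,𝒫) ≤ |X|. -/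
theorem splineSpace_restriction_injective {G : Type*} {m : ℕ} (X : Finset G)
    (Gs : Fin m → Set G) (hcover : (⋃ i, Gs i) = Set.univ)
    (P : ∀ i, Submodule ℝ (↥(Gs i) → ℝ)) [∀ i, FiniteDimensional ℝ (P i)]
    (hunis : ∀ i, ∀ p ∈ P i,
      (∀ x (_ : x ∈ X) (hxi : x ∈ Gs i), p ⟨x, hxi⟩ = 0) → p = 0) :
    (∀ s : splineSpace X Gs P,
        (∀ x (_ : x ∈ X) (i : Fin m) (hi : x ∈ Gs i),
          (s : ∀ i, ↥(Gs i) → ℝ) i ⟨x, hi⟩ = 0) → s = 0) ∧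
      Module.finrank ℝ (splineSpace X Gs P) ≤ X.card := by
  have hinj : ∀ s : splineSpace X Gs P,
      (∀ x (_ : x ∈ X) (i : Fin m) (hi : x ∈ Gs i),
        (s : ∀ i, ↥(Gs i) → ℝ) i ⟨x, hi⟩ = 0) → s = 0 := by
    intro s hs
    ext i y
    have h0 : (s : ∀ i, ↥(Gs i) → ℝ) i = 0 :=
      hunis i _ (s.2.1 i) (fun x hx hxi => hs x hx i hxi)
    simp [h0]
  refine ⟨hinj, ?_⟩
  -- choose for each x ∈ X some index
  have hmem : ∀ x : G, ∃ i, x ∈ Gs i := by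
    intro x
    have : (x : G) ∈ ⋃ i, Gs i := by rw [hcover]; trivial
    simpa using this
  choose idx hidx using hmem
  let T : splineSpace X Gs P →ₗ[ℝ] (↥X → ℝ) :=
    { toFun := fun s x => (s : ∀ i, ↥(Gs i) → ℝ) (idx x) ⟨x, hidx x⟩
      map_add' := fun s t => rfl
      map_smul' := fun c s => rfl }
  have hTinj : Function.Injective T := by
    rw [← LinearMap.ker_eq_bot, LinearMap.ker_eq_bot']
    intro s hs
    apply hinj
    intro x hx i hi
    have := congrFun hs ⟨x, hx⟩
    have h2 := s.2.2 i (idx x) x hx hi (hidx x)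
    simp only [T, LinearMap.coe_mk, AddHom.coe_mk, Pi.zero_apply] at this
    rw [h2, this]
  calc finrank ℝ (splineSpace X Gs P) ≤ finrank ℝ (↥X → ℝ) :=
        LinearMap.finrank_le_finrank_of_injective hTinj
    _ = X.card := by simp [finrank_fintype_fun_eq_card]
end

section
/- If S(X,G,P) is interpolatory, i.e., each X_i is an interpolation set for P_i (meaning |X_i| = dim P_i and X_i is unisolvent for P_i), then dim S(X,G,P) = |X|. -/
open Module

/-- If each Xᵢ is an interpolation set for Pᵢ (unisolvent with |Xᵢ| = dim Pᵢ),
then dim S(X,𝒢,𝒫) = |X|. -/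
theorem splineSpace_finrank_eq_card {G : Type*} {m : ℕ} (X : Finset G)
    (Gs : Fin m → Set G) (hcover : (⋃ i, Gs i) = Set.univ)
    (P : ∀ i, Submodule ℝ (↥(Gs i) → ℝ)) [∀ i, FiniteDimensional ℝ (P i)]
    (hunis : ∀ i, ∀ p ∈ P i,
      (∀ x (_ : x ∈ X) (hxi : x ∈ Gs i), p ⟨x, hxi⟩ = 0) → p = 0)
    (hcard : ∀ i, ((X : Set G) ∩ Gs i).ncard = Module.finrank ℝ (P i)) :
    Module.finrank ℝ (splineSpace X Gs P) = X.card := by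
  classical
  -- For each x, choose an index with x ∈ Gs (ix x)
  have hcov : ∀ x : G, ∃ i, x ∈ Gs i := by
    intro x
    have : x ∈ ⋃ i, Gs i := hcover ▸ Set.mem_univ x
    simpa using this
  choose ix hix using hcov
  -- Evaluation map
  let E : splineSpace X Gs P →ₗ[ℝ] (↥X → ℝ) :=
    { toFun := fun p x => (p : ∀ i, ↥(Gs i) → ℝ) (ix x) ⟨x, hix x⟩
      map_add' := fun p q => rfl
      map_smul' := fun c p => rfl }
  have hEinj : Function.Injective E := by
    rw [← LinearMap.ker_eq_bot, LinearMap.ker_eq_bot']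
    intro p hp
    ext i z
    have hzero : (p : ∀ i, ↥(Gs i) → ℝ) i = 0 := by
      apply hunis i _ (p.2.1 i)
      intro x hx hxi
      have h1 := p.2.2 i (ix x) x hx hxi (hix x)
      have h2 : E p ⟨x, hx⟩ = 0 := by rw [hp]; rfl
      simpa [E, h1] using h2
    simp [hzero]
  have hEsurj : Function.Surjective E := by
    intro f
    -- for each i, the evaluation map on X ∩ Gs i
    have key : ∀ i, ∃ p ∈ P i, ∀ x (hx : x ∈ X) (hxi : x ∈ Gs i),
        p ⟨x, hxi⟩ = f ⟨x, hx⟩ := by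
      intro i
      set s : Set G := (X : Set G) ∩ Gs i with hs
      have hsfin : s.Finite := X.finite_toSet.inter_of_left _
      haveI : Fintype ↥s := hsfin.fintype
      let ev : ↥(P i) →ₗ[ℝ] (↥s → ℝ) :=
        { toFun := fun p y => (p : ↥(Gs i) → ℝ) ⟨y.1, y.2.2⟩
          map_add' := fun p q => rfl
          map_smul' := fun c p => rfl }
      have hinj : Function.Injective ev := by
        rw [← LinearMap.ker_eq_bot, LinearMap.ker_eq_bot']
        intro p hp
        have : (p : ↥(Gs i) → ℝ) = 0 := by
          apply hunis i _ p.2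
          intro x hx hxi
          have := congrFun hp ⟨x, ⟨hx, hxi⟩⟩
          simpa [ev] using this
        exact Subtype.ext this
      have hdim : finrank ℝ (P i) = finrank ℝ (↥s → ℝ) := by
        rw [Module.finrank_fintype_fun_eq_card]
        rw [← hcard i, ← Nat.card_coe_set_eq, Nat.card_eq_fintype_card]
      have hsurj : Function.Surjective ev :=
        (LinearMap.injective_iff_surjective_of_finrank_eq_finrank hdim).mp hinj
      obtain ⟨p, hp⟩ := hsurj (fun y => f ⟨y.1, y.2.1⟩)
      refine ⟨(p : ↥(Gs i) → ℝ), p.2, fun x hx hxi => ?_⟩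
      have := congrFun hp ⟨x, ⟨hx, hxi⟩⟩
      simpa [ev] using this
    choose p hpP hpval using key
    refine ⟨⟨p, hpP, fun i j x hx hi hj => ?_⟩, ?_⟩
    · rw [hpval i x hx hi, hpval j x hx hj]
    · funext x
      exact hpval (ix x) x.1 x.2 (hix x.1)
  have e : splineSpace X Gs P ≃ₗ[ℝ] (↥X → ℝ) :=
    LinearEquiv.ofBijective E ⟨hEinj, hEsurj⟩
  rw [e.finrank_eq, Module.finrank_fintype_fun_eq_card, Fintype.card_coe]
end

section
/- An interpolatory overlap spline space S(X,G,P) possesses a Lagrange basis ℓ_1,...,ℓ_N: for each j there is a unique overlap spline ℓ_j with ℓ_j(x_k) = δ_{jk} for all k, these splines form a basis of S(X,G,P), and ℓ_j is local in the sense that its i-th patch ℓ_{ji} is zero whenever x_j ∉ X_i. -/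
open scoped Classical

open Module

/-- An interpolatory overlap spline space has a Lagrange basis: unique splines
ℓⱼ with ℓⱼ(x_k) = δⱼₖ; they form a basis and are local (the i-th patch of ℓⱼ
vanishes identically whenever xⱼ ∉ Xᵢ). -/
theorem splineSpace_lagrange_basis {G : Type*} {m : ℕ} (X : Finset G)
    (Gs : Fin m → Set G) (hcover : (⋃ i, Gs i) = Set.univ)
    (P : ∀ i, Submodule ℝ (↥(Gs i) → ℝ)) [∀ i, FiniteDimensional ℝ (P i)]
    (hunis : ∀ i, ∀ p ∈ P i,
      (∀ x (_ : x ∈ X) (hxi : x ∈ Gs i), p ⟨x, hxi⟩ = 0) → p = 0)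
    (hcard : ∀ i, ((X : Set G) ∩ Gs i).ncard = Module.finrank ℝ (P i)) :
    ∃ ℓ : ↥(X : Set G) → splineSpace X Gs P,
      (∀ j k : ↥(X : Set G), ∀ (i : Fin m) (hk : (k : G) ∈ Gs i),
        ((ℓ j : ∀ i, ↥(Gs i) → ℝ)) i ⟨k, hk⟩ = if j = k then 1 else 0) ∧
      (∀ j : ↥(X : Set G), ∀ s : splineSpace X Gs P,
        (∀ k : ↥(X : Set G), ∀ (i : Fin m) (hk : (k : G) ∈ Gs i),
          (s : ∀ i, ↥(Gs i) → ℝ) i ⟨k, hk⟩ = if j = k then 1 else 0) → s = ℓ j) ∧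
      (∀ j : ↥(X : Set G), ∀ i : Fin m, (j : G) ∉ Gs i →
        (ℓ j : ∀ i, ↥(Gs i) → ℝ) i = 0) ∧
      LinearIndependent ℝ ℓ ∧
      Submodule.span ℝ (Set.range ℓ) = ⊤ := by
  classical
  -- finiteness of each X ∩ Gᵢ
  have hfinY : ∀ i, ((X : Set G) ∩ Gs i).Finite := fun i =>
    X.finite_toSet.inter_of_left _
  -- the evaluation map on each patch
  let E : ∀ i, ↥(P i) →ₗ[ℝ] (↥((X : Set G) ∩ Gs i) → ℝ) := fun i =>
    { toFun := fun p x => (p : ↥(Gs i) → ℝ) ⟨x.1, x.2.2⟩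
      map_add' := fun p q => rfl
      map_smul' := fun c p => rfl }
  have hEinj : ∀ i, Function.Injective (E i) := by
    intro i
    rw [← LinearMap.ker_eq_bot, LinearMap.ker_eq_bot']
    intro p hp
    apply Subtype.ext
    refine hunis i (p : ↥(Gs i) → ℝ) p.2 (fun x hx hxi => ?_)
    exact congrFun hp ⟨x, ⟨hx, hxi⟩⟩
  have hEsurj : ∀ i, Function.Surjective (E i) := by
    intro i
    haveI := (hfinY i).fintype
    rw [← LinearMap.range_eq_top]
    apply Submodule.eq_top_of_finrank_eq
    rw [LinearMap.finrank_range_of_inj (hEinj i), Module.finrank_pi,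
      ← Nat.card_eq_fintype_card, Nat.card_coe_set_eq, hcard i]
  -- interpolation: any data on X is matched by a spline
  have hinterp : ∀ f : ↥(X : Set G) → ℝ, ∃ s : ↥(splineSpace X Gs P),
      ∀ (x : G) (hx : x ∈ (X : Set G)) (i : Fin m) (hi : x ∈ Gs i),
        (s : ∀ i, ↥(Gs i) → ℝ) i ⟨x, hi⟩ = f ⟨x, hx⟩ := by
    intro f
    choose p hp using fun i => hEsurj i (fun y => f ⟨y.1, y.2.1⟩)
    have hval : ∀ (i : Fin m) (x : G) (hx : x ∈ (X : Set G)) (hi : x ∈ Gs i),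
        (p i : ↥(Gs i) → ℝ) ⟨x, hi⟩ = f ⟨x, hx⟩ := by
      intro i x hx hi
      exact congrFun (hp i) ⟨x, ⟨hx, hi⟩⟩
    refine ⟨⟨fun i => (p i : ↥(Gs i) → ℝ), ⟨fun i => (p i).2, ?_⟩⟩, ?_⟩
    · intro i j x hx hi hj
      exact (hval i x (Finset.mem_coe.mpr hx) hi).trans
        (hval j x (Finset.mem_coe.mpr hx) hj).symm
    · intro x hx i hi
      exact hval i x hx hi
  -- a spline vanishing on X is zero
  have hzero : ∀ s : ↥(splineSpace X Gs P),
      (∀ (x : G) (hx : x ∈ X) (i : Fin m) (hi : x ∈ Gs i),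
        (s : ∀ i, ↥(Gs i) → ℝ) i ⟨x, hi⟩ = 0) → s = 0 := by
    intro s hs
    obtain ⟨h1, _⟩ := s.2
    apply Subtype.ext
    funext i
    exact hunis i (s.1 i) (h1 i) (fun x hx hxi => hs x hx i hxi)
  -- the delta data
  let d : ↥(X : Set G) → ↥(X : Set G) → ℝ := fun j k => if j = k then 1 else 0
  choose ℓ hℓ using fun j => hinterp (d j)
  have hprop1 : ∀ j k : ↥(X : Set G), ∀ (i : Fin m) (hk : (k : G) ∈ Gs i),
      ((ℓ j : ∀ i, ↥(Gs i) → ℝ)) i ⟨k, hk⟩ = if j = k then 1 else 0 := by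
    intro j k i hk
    exact hℓ j k.1 k.2 i hk
  refine ⟨ℓ, hprop1, ?_, ?_, ?_, ?_⟩
  · -- uniqueness
    intro j s hs
    have : s - ℓ j = 0 := by
      apply hzero
      intro x hx i hi
      have h1 := hs ⟨x, hx⟩ i hi
      have h2 := hprop1 j ⟨x, hx⟩ i hi
      show (s : ∀ i, ↥(Gs i) → ℝ) i ⟨x, hi⟩ - (ℓ j : ∀ i, ↥(Gs i) → ℝ) i ⟨x, hi⟩ = 0
      rw [h1, h2, sub_self]
    exact sub_eq_zero.mp this
  · -- locality
    intro j i hji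
    refine hunis i _ ((ℓ j).2.1 i) (fun x hx hxi => ?_)
    rw [hℓ j x hx i hxi]
    have : j ≠ (⟨x, hx⟩ : ↥(X : Set G)) := by
      intro h
      exact hji (h ▸ hxi)
    simp [d, this]
  all_goals {
    -- common setup: global evaluation map V
    have hixex : ∀ x : G, ∃ i, x ∈ Gs i := by
      intro x
      have hx : x ∈ ⋃ i, Gs i := hcover.symm ▸ Set.mem_univ x
      exact Set.mem_iUnion.1 hx
    choose ix hix using hixex
    let V : ↥(splineSpace X Gs P) →ₗ[ℝ] (↥(X : Set G) → ℝ) :=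
      { toFun := fun s k => (s : ∀ i, ↥(Gs i) → ℝ) (ix k) ⟨k, hix k⟩
        map_add' := fun s t => rfl
        map_smul' := fun c s => rfl }
    have hVinj : Function.Injective V := by
      rw [← LinearMap.ker_eq_bot, LinearMap.ker_eq_bot']
      intro s hs
      apply hzero
      intro x hx i hi
      obtain ⟨_, h2⟩ := s.2
      have := h2 i (ix x) x hx hi (hix x)
      rw [this]
      exact congrFun hs ⟨x, hx⟩
    have hVl : ∀ j, V (ℓ j) = d j := by
      intro j
      funext k
      exact hℓ j k.1 k.2 (ix k.1) (hix k.1)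
    haveI : Fintype ↥(X : Set G) := X.finite_toSet.fintype
    have hcomp : (⇑V ∘ ℓ) = ⇑(Pi.basisFun ℝ ↥(X : Set G)) := by
      funext j
      rw [Function.comp_apply, hVl j, Pi.basisFun_apply]
      funext k
      simp [d, Pi.single_apply, eq_comm]
    first
    | exact LinearIndependent.of_comp V
        (hcomp ▸ (Pi.basisFun ℝ ↥(X : Set G)).linearIndependent)
    | { have hVsurj : Function.Surjective V := by
          intro f
          obtain ⟨s, hs⟩ := hinterp f
          exact ⟨s, funext fun k => hs k.1 k.2 (ix k.1) (hix k.1)⟩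
        apply Submodule.map_injective_of_injective hVinj
        rw [Submodule.map_span, ← Set.range_comp, hcomp, Submodule.map_top,
          LinearMap.range_eq_top.2 hVsurj, (Pi.basisFun ℝ ↥(X : Set G)).span_eq] }
  }
end

section
/- In the uniform-grid bivariate quadratic overlap spline setting with 5-star index sets, every overlap spline s in the kernel of the restriction map T satisfies Δp_{ij} ≡ 0 for all patches p_{ij}; consequently no choice of dim S(X,G,P_2) collocation nodes can yield a nonsingular collocation matrix for the Laplace operator. -/
/-- Overlap splines with patches given as globally defined functions. -/
def splineSpaceG {G : Type*} {ι : Type*} (X : Finset G) (Gs : ι → Set G)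
    (P : ι → Submodule ℝ (G → ℝ)) : Submodule ℝ (ι → G → ℝ) where
  carrier := {p | (∀ i, p i ∈ P i) ∧
    ∀ i j, ∀ x ∈ X, x ∈ Gs i → x ∈ Gs j → p i x = p j x}
  add_mem' := by
    rintro p q ⟨hp1, hp2⟩ ⟨hq1, hq2⟩
    exact ⟨fun i => (P i).add_mem (hp1 i) (hq1 i),
      fun i j x hx hi hj => by
        simp only [Pi.add_apply]
        rw [hp2 i j x hx hi hj, hq2 i j x hx hi hj]⟩
  zero_mem' := ⟨fun i => (P i).zero_mem, fun i j x hx hi hj => rfl⟩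
  smul_mem' := by
    rintro c p ⟨hp1, hp2⟩
    exact ⟨fun i => (P i).smul_mem c (hp1 i),
      fun i j x hx hi hj => by
        simp only [Pi.smul_apply]
        rw [hp2 i j x hx hi hj]⟩

/-- Laplacian of a function of two real variables. -/
noncomputable def lap2 (f : ℝ × ℝ → ℝ) (x : ℝ × ℝ) : ℝ :=
  deriv (deriv fun t => f (t, x.2)) x.1 + deriv (deriv fun t => f (x.1, t)) x.2

/-- The 6-dimensional space Π²₂ of bivariate polynomials of total degree ≤ 2. -/
noncomputable def Pi22 : Submodule ℝ (ℝ × ℝ → ℝ) :=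
  Submodule.span ℝ {fun _ => (1 : ℝ), fun y => y.1, fun y => y.2,
    fun y => y.1 ^ 2, fun y => y.1 * y.2, fun y => y.2 ^ 2}

/-! ### Auxiliary lemmas -/

private def quadSub : Submodule ℝ (ℝ × ℝ → ℝ) where
  carrier := {q | ∃ a b c d e f : ℝ, ∀ p : ℝ × ℝ,
    q p = a + b*p.1 + c*p.2 + d*p.1^2 + e*(p.1*p.2) + f*p.2^2}
  add_mem' := by
    rintro q r ⟨a,b,c,d,e,f,hq⟩ ⟨a',b',c',d',e',f',hr⟩
    exact ⟨a+a', b+b', c+c', d+d', e+e', f+f', fun p => by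
      simp only [Pi.add_apply, hq p, hr p]; ring⟩
  zero_mem' := ⟨0,0,0,0,0,0, fun p => by simp⟩
  smul_mem' := by
    rintro t q ⟨a,b,c,d,e,f,hq⟩
    exact ⟨t*a, t*b, t*c, t*d, t*e, t*f, fun p => by
      simp only [Pi.smul_apply, smul_eq_mul, hq p]; ring⟩

private lemma pi22_repr (q : ℝ × ℝ → ℝ) (hq : q ∈ Pi22) : ∃ a b c d e f : ℝ,
    ∀ p : ℝ × ℝ, q p = a + b*p.1 + c*p.2 + d*p.1^2 + e*(p.1*p.2) + f*p.2^2 := by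
  have hle : Pi22 ≤ quadSub := by
    rw [Pi22, Submodule.span_le]
    rintro g hg
    simp only [Set.mem_insert_iff, Set.mem_singleton_iff] at hg
    rcases hg with rfl|rfl|rfl|rfl|rfl|rfl
    · exact ⟨1,0,0,0,0,0, fun p => by ring⟩
    · exact ⟨0,1,0,0,0,0, fun p => by ring⟩
    · exact ⟨0,0,1,0,0,0, fun p => by ring⟩
    · exact ⟨0,0,0,1,0,0, fun p => by ring⟩
    · exact ⟨0,0,0,0,1,0, fun p => by ring⟩
    · exact ⟨0,0,0,0,0,1, fun p => by ring⟩
  exact hle hq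

private lemma quad_mem_pi22 (A B : ℝ) :
    (fun p : ℝ × ℝ => (p.1 - A) * (p.2 - B)) ∈ Pi22 := by
  have h : (fun p : ℝ × ℝ => (p.1 - A) * (p.2 - B))
      = (A*B) • (fun _ : ℝ × ℝ => (1:ℝ)) + (-B) • (fun p : ℝ × ℝ => p.1)
        + (-A) • (fun p : ℝ × ℝ => p.2) + (fun p : ℝ × ℝ => p.1 * p.2) := by
    funext p
    simp only [Pi.add_apply, Pi.smul_apply, smul_eq_mul]
    ring
  rw [h]
  refine Submodule.add_mem _ (Submodule.add_mem _ (Submodule.add_mem _ ?_ ?_) ?_) ?_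
  · exact Submodule.smul_mem _ _ (Submodule.subset_span (Set.mem_insert _ _))
  · exact Submodule.smul_mem _ _ (Submodule.subset_span
      (Set.mem_insert_of_mem _ (Set.mem_insert _ _)))
  · exact Submodule.smul_mem _ _ (Submodule.subset_span
      (Set.mem_insert_of_mem _ (Set.mem_insert_of_mem _ (Set.mem_insert _ _))))
  · exact Submodule.subset_span (Set.mem_insert_of_mem _ (Set.mem_insert_of_mem _
      (Set.mem_insert_of_mem _ (Set.mem_insert_of_mem _ (Set.mem_insert _ _)))))

private lemma deriv_deriv_quad (A B C : ℝ) (x : ℝ) :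
    deriv (deriv (fun t : ℝ => A*t^2 + B*t + C)) x = 2*A := by
  have h1 : deriv (fun t : ℝ => A*t^2 + B*t + C) = fun t => 2*A*t + B := by
    funext t
    have H := (((hasDerivAt_pow 2 t).const_mul A).add
      ((hasDerivAt_id t).const_mul B)).add_const C
    have hv : A * (↑(2:ℕ) * t ^ (2-1)) + B * 1 = 2*A*t + B := by push_cast; ring
    exact (hv ▸ H).deriv
  rw [h1]
  have H := ((hasDerivAt_id x).const_mul (2*A)).add_const B
  have hv : (2*A) * 1 = 2*A := by ring
  exact (hv ▸ H).deriv

private lemma lap2_quad (a b c d e f : ℝ) (p : ℝ × ℝ) :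
    lap2 (fun q : ℝ × ℝ => a + b*q.1 + c*q.2 + d*q.1^2 + e*(q.1*q.2) + f*q.2^2) p
      = 2*d + 2*f := by
  have h1 : (fun t : ℝ => (fun q : ℝ × ℝ =>
        a + b*q.1 + c*q.2 + d*q.1^2 + e*(q.1*q.2) + f*q.2^2) (t, p.2))
      = fun t : ℝ => d*t^2 + (b + e*p.2)*t + (a + c*p.2 + f*p.2^2) := by
    funext t; show a + b*t + c*p.2 + d*t^2 + e*(t*p.2) + f*p.2^2 = _; ring
  have h2 : (fun t : ℝ => (fun q : ℝ × ℝ =>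
        a + b*q.1 + c*q.2 + d*q.1^2 + e*(q.1*q.2) + f*q.2^2) (p.1, t))
      = fun t : ℝ => f*t^2 + (c + e*p.1)*t + (a + b*p.1 + d*p.1^2) := by
    funext t; show a + b*p.1 + c*t + d*p.1^2 + e*(p.1*t) + f*t^2 = _; ring
  unfold lap2
  rw [h1, h2, deriv_deriv_quad, deriv_deriv_quad]

private lemma lap2_prod (A B : ℝ) (p : ℝ × ℝ) :
    lap2 (fun q : ℝ × ℝ => (q.1 - A) * (q.2 - B)) p = 0 := by
  have h : (fun q : ℝ × ℝ => (q.1 - A) * (q.2 - B))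
      = fun q : ℝ × ℝ => (A*B) + (-B)*q.1 + (-A)*q.2 + 0*q.1^2 + 1*(q.1*q.2) + 0*q.2^2 := by
    funext q; ring
  rw [h, lap2_quad]; ring

private lemma lap2_zero (p : ℝ × ℝ) : lap2 (fun _ : ℝ × ℝ => (0:ℝ)) p = 0 := by
  simp [lap2]

/-- The kernel-spline patch `(y₁ - (i+1)h)(y₂ - (j+1)h)`. -/
private def patchProd (N : ℕ) (h : ℝ) (ij : Fin (N-1) × Fin (N-1)) (q : ℝ × ℝ) : ℝ :=
  (q.1 - (((ij.1 : ℕ) + 1 : ℕ) : ℝ) * h) * (q.2 - (((ij.2 : ℕ) + 1 : ℕ) : ℝ) * h)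

set_option maxHeartbeats 1000000 in
/-- In the uniform-grid bivariate quadratic overlap spline setting with 5-star
pieces, every spline in the kernel of the restriction map (i.e. vanishing at all
nodes of X) has harmonic patches, Δp_{ij} ≡ 0; consequently, for every choice of
D = dim S(X,𝒢,𝒫₂) = (N+1)² + (N−1)² collocation nodes and patch selection, the
collocation map s ↦ (Δp_{σ(j)}(y_j))ⱼ for the Laplace operator fails to be
injective, so no collocation matrix is nonsingular. -/
theorem grid_laplace_collocation_singular (N : ℕ) (hN : 2 ≤ N) (ε : ℝ)
    (hε : 0 < ε) (hε' : ε < (Real.sqrt 2 - 1) * (1 / N)) :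
    letI h : ℝ := 1 / N
    letI X : Finset (ℝ × ℝ) := Finset.image
      (fun ij : Fin (N + 1) × Fin (N + 1) => (((ij.1 : ℕ) : ℝ) * h, ((ij.2 : ℕ) : ℝ) * h))
      Finset.univ
    letI Gs : Fin (N - 1) × Fin (N - 1) → Set (ℝ × ℝ) := fun ij =>
      {p | p.1 ∈ Set.Icc (0 : ℝ) 1 ∧ p.2 ∈ Set.Icc (0 : ℝ) 1 ∧
        Real.sqrt ((p.1 - (((ij.1 : ℕ) + 1 : ℕ) : ℝ) * h) ^ 2
          + (p.2 - (((ij.2 : ℕ) + 1 : ℕ) : ℝ) * h) ^ 2) < h + ε}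
    letI P : Fin (N - 1) × Fin (N - 1) → Submodule ℝ (ℝ × ℝ → ℝ) := fun _ => Pi22
    letI D : ℕ := (N + 1) ^ 2 + (N - 1) ^ 2
    (∀ s ∈ splineSpaceG X Gs P,
      (∀ x ∈ X, ∀ ij, x ∈ Gs ij → s ij x = 0) →
      ∀ ij, ∀ p : ℝ × ℝ, lap2 (s ij) p = 0) ∧
    ∀ (y : Fin D → ℝ × ℝ) (σ : Fin D → Fin (N - 1) × Fin (N - 1)),
      (∀ j, y j ∈ Gs (σ j)) →
      ¬ Function.Injective (fun s : splineSpaceG X Gs P =>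
        fun j : Fin D => lap2 ((s : _ → ℝ × ℝ → ℝ) (σ j)) (y j)) := by
  have hNnat : 0 < N := by omega
  have hNR : (0:ℝ) < (N:ℝ) := by exact_mod_cast hNnat
  set h : ℝ := 1/(N:ℝ) with hh
  have hhpos : 0 < h := by rw [hh]; positivity
  have hNh : (N:ℝ) * h = 1 := by rw [hh]; field_simp
  set X : Finset (ℝ × ℝ) := Finset.image
    (fun ij : Fin (N + 1) × Fin (N + 1) => (((ij.1 : ℕ) : ℝ) * h, ((ij.2 : ℕ) : ℝ) * h))
    Finset.univ with hX
  set Gs : Fin (N - 1) × Fin (N - 1) → Set (ℝ × ℝ) := fun ij =>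
    {p : ℝ × ℝ | p.1 ∈ Set.Icc (0 : ℝ) 1 ∧ p.2 ∈ Set.Icc (0 : ℝ) 1 ∧
      Real.sqrt ((p.1 - (((ij.1 : ℕ) + 1 : ℕ) : ℝ) * h) ^ 2
        + (p.2 - (((ij.2 : ℕ) + 1 : ℕ) : ℝ) * h) ^ 2) < h + ε} with hGs
  constructor
  · -- Part 1 : kernel splines are harmonic
    rintro s ⟨hsP, -⟩ hz ij p
    obtain ⟨a,b,c,d,e,f,hq⟩ := pi22_repr (s ij) (hsP ij)
    have hsf : s ij = fun q : ℝ × ℝ =>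
        a + b*q.1 + c*q.2 + d*q.1^2 + e*(q.1*q.2) + f*q.2^2 := funext hq
    rw [hsf, lap2_quad]
    set m := (ij.1 : ℕ) with hm
    set n := (ij.2 : ℕ) with hn
    have hm' : m + 2 ≤ N := by have := ij.1.isLt; omega
    have hn' : n + 2 ≤ N := by have := ij.2.isLt; omega
    have key : ∀ k l : ℕ, k ≤ N → l ≤ N →
        (((k:ℝ)*h - ((m+1:ℕ):ℝ)*h)^2 + ((l:ℝ)*h - ((n+1:ℕ):ℝ)*h)^2) ≤ h^2 →
        a + b*((k:ℝ)*h) + c*((l:ℝ)*h) + d*((k:ℝ)*h)^2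
          + e*((k:ℝ)*h*((l:ℝ)*h)) + f*((l:ℝ)*h)^2 = 0 := by
      intro k l hk hl hdist
      have hXmem : ((k:ℝ)*h, (l:ℝ)*h) ∈ X := by
        rw [hX]
        exact Finset.mem_image.mpr ⟨(⟨k, by omega⟩, ⟨l, by omega⟩), Finset.mem_univ _, rfl⟩
      have hGmem : ((k:ℝ)*h, (l:ℝ)*h) ∈ Gs ij := by
        simp only [hGs, Set.mem_setOf_eq, Set.mem_Icc]
        refine ⟨⟨by positivity, ?_⟩, ⟨by positivity, ?_⟩, ?_⟩
        · have hk' : (k:ℝ) ≤ (N:ℝ) := by exact_mod_cast hk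
          nlinarith [mul_nonneg (sub_nonneg.mpr hk') hhpos.le, hNh]
        · have hl' : (l:ℝ) ≤ (N:ℝ) := by exact_mod_cast hl
          nlinarith [mul_nonneg (sub_nonneg.mpr hl') hhpos.le, hNh]
        · have h2 := Real.sqrt_le_sqrt hdist
          rw [Real.sqrt_sq hhpos.le] at h2
          exact lt_of_le_of_lt h2 (by linarith)
      have hv := hz _ hXmem ij hGmem
      rw [hq] at hv
      exact hv
    have E0 := key (m+1) (n+1) (by omega) (by omega) (by
      have : ((((m+1:ℕ)):ℝ)*h - ((m+1:ℕ):ℝ)*h)^2 + ((((n+1:ℕ)):ℝ)*h - ((n+1:ℕ):ℝ)*h)^2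
          = 0 := by ring
      rw [this]; positivity)
    have E1 := key m (n+1) (by omega) (by omega)
      (le_of_eq (by push_cast; ring))
    have E2 := key (m+2) (n+1) (by omega) (by omega)
      (le_of_eq (by push_cast; ring))
    have E3 := key (m+1) n (by omega) (by omega)
      (le_of_eq (by push_cast; ring))
    have E4 := key (m+1) (n+2) (by omega) (by omega)
      (le_of_eq (by push_cast; ring))
    push_cast at E0 E1 E2 E3 E4
    have hd : d * (2*h^2) = 0 := by linear_combination E1 + E2 - 2*E0
    have hf : f * (2*h^2) = 0 := by linear_combination E3 + E4 - 2*E0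
    have h2 : (2:ℝ)*h^2 ≠ 0 := by positivity
    have hd0 : d = 0 := by
      rcases mul_eq_zero.mp hd with h'|h'
      · exact h'
      · exact absurd h' h2
    have hf0 : f = 0 := by
      rcases mul_eq_zero.mp hf with h'|h'
      · exact h'
      · exact absurd h' h2
    rw [hd0, hf0]; ring
  · -- Part 2 : collocation is never injective
    intro y σ hy hinj
    have vanish : ∀ (ij : Fin (N-1) × Fin (N-1)) (x : ℝ × ℝ),
        x ∈ X → x ∈ Gs ij → patchProd N h ij x = 0 := by
      intro ij x hxX hxG
      rw [hX] at hxX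
      obtain ⟨⟨k, l⟩, -, rfl⟩ := Finset.mem_image.mp hxX
      simp only [hGs, Set.mem_setOf_eq, Set.mem_Icc] at hxG
      obtain ⟨-, -, hdist⟩ := hxG
      set m := (ij.1 : ℕ) with hm
      set n := (ij.2 : ℕ) with hn
      have hsq : (((k:ℕ):ℝ)*h - ((m+1:ℕ):ℝ)*h)^2 + (((l:ℕ):ℝ)*h - ((n+1:ℕ):ℝ)*h)^2
          < (h+ε)^2 := (Real.sqrt_lt' (by linarith)).mp hdist
      have hsqrt2 : Real.sqrt 2 ^ 2 = 2 := Real.sq_sqrt (by norm_num)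
      have hεlt : h + ε < Real.sqrt 2 * h := by
        have hr : (Real.sqrt 2 - 1)*h = Real.sqrt 2*h - h := by ring
        rw [hr] at hε'
        linarith
      have hmul := mul_self_lt_mul_self (by linarith : (0:ℝ) ≤ h + ε) hεlt
      have h2h : (Real.sqrt 2*h)*(Real.sqrt 2*h) = 2*h^2 := by
        have : (Real.sqrt 2*h)*(Real.sqrt 2*h) = Real.sqrt 2^2 * h^2 := by ring
        rw [this, hsqrt2]
      have hlt2 : (h+ε)^2 < 2*h^2 := by nlinarith [hmul, h2h]
      have hS : (((k:ℕ):ℝ) - ((m:ℝ)+1))^2 + (((l:ℕ):ℝ) - ((n:ℝ)+1))^2 < 2 := by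
        have hh2 : (0:ℝ) < h^2 := by positivity
        have hE : (((k:ℕ):ℝ)*h - ((m+1:ℕ):ℝ)*h)^2 + (((l:ℕ):ℝ)*h - ((n+1:ℕ):ℝ)*h)^2
            = ((((k:ℕ):ℝ) - ((m:ℝ)+1))^2 + (((l:ℕ):ℝ) - ((n:ℝ)+1))^2) * h^2 := by
          push_cast; ring
        have hlt := hsq.trans hlt2
        rw [hE] at hlt
        exact lt_of_mul_lt_mul_right hlt hh2.le
      obtain ⟨u, hu⟩ : ∃ u : ℤ, ((u:ℤ):ℝ) = ((k:ℕ):ℝ) - ((m:ℝ)+1) :=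
        ⟨((k:ℕ):ℤ) - ((m:ℤ)+1), by push_cast; ring⟩
      obtain ⟨v, hv⟩ : ∃ v : ℤ, ((v:ℤ):ℝ) = ((l:ℕ):ℝ) - ((n:ℝ)+1) :=
        ⟨((l:ℕ):ℤ) - ((n:ℤ)+1), by push_cast; ring⟩
      have hZ : u^2 + v^2 < 2 := by
        have hc : ((u^2 + v^2 : ℤ):ℝ) < 2 := by push_cast; rw [hu, hv]; exact hS
        exact_mod_cast hc
      have huv : u = 0 ∨ v = 0 := by
        by_contra hc
        push_neg at hc
        have h1 : 1 ≤ u^2 := by nlinarith [Int.one_le_abs hc.1, sq_abs u, abs_nonneg u]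
        have h2 : 1 ≤ v^2 := by nlinarith [Int.one_le_abs hc.2, sq_abs v, abs_nonneg v]
        omega
      show (((k:ℕ):ℝ)*h - ((m+1:ℕ):ℝ)*h) * (((l:ℕ):ℝ)*h - ((n+1:ℕ):ℝ)*h) = 0
      rcases huv with h0 | h0
      · have hkeq : ((k:ℕ):ℝ) - ((m:ℝ)+1) = 0 := by
          rw [← hu, h0]; norm_num
        push_cast
        linear_combination (h * (((l:ℕ):ℝ)*h - (((n:ℕ):ℝ)+1)*h)) * hkeq
      · have hleq : ((l:ℕ):ℝ) - ((n:ℝ)+1) = 0 := by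
          rw [← hv, h0]; norm_num
        push_cast
        linear_combination ((((k:ℕ):ℝ)*h - (((m:ℕ):ℝ)+1)*h) * h) * hleq
    have hs0mem : patchProd N h ∈ splineSpaceG X Gs (fun _ => Pi22) := by
      refine ⟨fun ij => quad_mem_pi22 _ _, fun i j x hx hi hj => ?_⟩
      rw [vanish i x hx hi, vanish j x hx hj]
    have hharm : ∀ ij p, lap2 (patchProd N h ij) p = 0 := by
      intro ij p
      exact lap2_prod _ _ p
    have hfeq : (fun j : Fin ((N + 1) ^ 2 + (N - 1) ^ 2) =>
          lap2 (patchProd N h (σ j)) (y j))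
        = (fun j : Fin ((N + 1) ^ 2 + (N - 1) ^ 2) =>
          lap2 (((0 : splineSpaceG X Gs (fun _ => Pi22)) :
            (Fin (N-1) × Fin (N-1)) → ℝ × ℝ → ℝ) (σ j)) (y j)) := by
      funext j
      rw [hharm]
      have hz0 : (((0 : splineSpaceG X Gs (fun _ => Pi22)) :
          (Fin (N-1) × Fin (N-1)) → ℝ × ℝ → ℝ) (σ j)) = fun _ : ℝ × ℝ => (0:ℝ) := rfl
      rw [hz0, lap2_zero]
    have hcontra : (⟨patchProd N h, hs0mem⟩ : splineSpaceG X Gs (fun _ => Pi22)) = 0 :=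
      hinj hfeq
    have h0 : patchProd N h = (0 : (Fin (N-1) × Fin (N-1)) → ℝ × ℝ → ℝ) :=
      congrArg Subtype.val hcontra
    have hlt : 0 < N - 1 := by omega
    have hzv : patchProd N h (⟨0, hlt⟩, ⟨0, hlt⟩) (0, 0) = 0 := by rw [h0]; rfl
    have hval : patchProd N h (⟨0, hlt⟩, ⟨0, hlt⟩) (0, 0) = h*h := by
      show ((0:ℝ) - (((0:ℕ)+1:ℕ):ℝ)*h) * ((0:ℝ) - (((0:ℕ)+1:ℕ):ℝ)*h) = h*h
      norm_num
    rw [hzv] at hval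
    nlinarith [hhpos, hval]
end

section
/- Let K be conditionally positive definite with respect to a finite-dimensional function space Q on G, and let X = {x_1,...,x_n} be unisolvent for Q. Then X is an interpolation set for the space P_{K,X,Q} = { Σ_j c_j K(·,x_j) + p̃ : p̃ ∈ Q, c ∈ R^n with Σ_j c_j p(x_j) = 0 for all p ∈ Q }. -/
/-- If K is conditionally positive definite with respect to a finite-dimensional
space Q of functions on G, and X = {x₁,…,xₙ} is unisolvent for Q, then X is an
interpolation set for
P_{K,X,Q} = {Σⱼ cⱼ K(·,xⱼ) + p̃ : p̃ ∈ Q, Σⱼ cⱼ p(xⱼ) = 0 for all p ∈ Q}: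
the interpolation problem with arbitrary data on X is uniquely solvable there. -/
theorem conditional_kernel_interpolation_set {G : Type*} (K : G → G → ℝ)
    (hsymm : ∀ x y, K x y = K y x)
    (Q : Submodule ℝ (G → ℝ)) [FiniteDimensional ℝ Q]
    (hcpd : ∀ (n : ℕ) (x : Fin n → G), Function.Injective x →
      ∀ c : Fin n → ℝ, c ≠ 0 → (∀ p ∈ Q, ∑ j, c j * p (x j) = 0) →
        0 < ∑ i, ∑ j, c i * c j * K (x i) (x j))
    (n : ℕ) (x : Fin n → G) (hx : Function.Injective x)
    (hunis : ∀ p ∈ Q, (∀ j, p (x j) = 0) → p = 0) :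
    ∀ v : Fin n → ℝ, ∃! f : G → ℝ,
      (∃ (c : Fin n → ℝ) (p : G → ℝ), p ∈ Q ∧
        (∀ q ∈ Q, ∑ j, c j * q (x j) = 0) ∧
        f = (fun y => ∑ j, c j * K y (x j)) + p) ∧
      ∀ j, f (x j) = v j := by
  classical
  -- Key lemma: a function of the prescribed form vanishing on X is zero.
  have key : ∀ (d : Fin n → ℝ) (q : G → ℝ), q ∈ Q →
      (∀ r ∈ Q, ∑ j, d j * r (x j) = 0) →
      (∀ i, (∑ j, d j * K (x i) (x j)) + q (x i) = 0) →
      d = 0 ∧ q = 0 := by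
    intro d q hq hdQ hzero
    have hd : d = 0 := by
      by_contra hne
      have hpos := hcpd n x hx d hne hdQ
      have h2 : ∑ i, d i * q (x i) = 0 := hdQ q hq
      have h1 : ∑ i, d i * ((∑ j, d j * K (x i) (x j)) + q (x i)) = 0 :=
        Finset.sum_eq_zero fun i _ => by rw [hzero i, mul_zero]
      have hsum : ∑ i, ∑ j, d i * d j * K (x i) (x j) = 0 := by
        have : ∑ i, ∑ j, d i * d j * K (x i) (x j)
            = ∑ i, d i * ((∑ j, d j * K (x i) (x j)) + q (x i))
              - ∑ i, d i * q (x i) := by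
          rw [← Finset.sum_sub_distrib]
          refine Finset.sum_congr rfl fun i _ => ?_
          rw [mul_add, add_sub_cancel_right, Finset.mul_sum]
          exact Finset.sum_congr rfl fun j _ => mul_assoc _ _ _
        rw [this, h1, h2, sub_zero]
      linarith
    subst hd
    refine ⟨rfl, hunis q hq fun j => ?_⟩
    have := hzero j
    simpa using this
  intro v
  -- Evaluation map E : Q → ℝⁿ
  let E : Q →ₗ[ℝ] EuclideanSpace ℝ (Fin n) :=
    { toFun := fun p => WithLp.toLp 2 (fun j => (p : G → ℝ) (x j))
      map_add' := fun p q => rfl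
      map_smul' := fun a p => rfl }
  have hE : ∀ (p : Q) (j : Fin n), E p j = (p : G → ℝ) (x j) := fun _ _ => rfl
  have hEinj : Function.Injective E := by
    rw [injective_iff_map_eq_zero]
    intro p hp
    have : (p : G → ℝ) = 0 := hunis p p.2 fun j => congrArg (fun w => w j) hp
    exact Subtype.ext this
  set V := (LinearMap.range E)ᗮ with hV
  have hVmem : ∀ c : EuclideanSpace ℝ (Fin n),
      c ∈ V ↔ ∀ q ∈ Q, ∑ j, c j * q (x j) = 0 := by
    intro c
    rw [Submodule.mem_orthogonal]
    constructor
    · intro hc q hq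
      have := hc (E ⟨q, hq⟩) ⟨⟨q, hq⟩, rfl⟩
      simpa [hE, PiLp.inner_apply, RCLike.inner_apply, mul_comm] using this
    · intro h u hu
      obtain ⟨p, rfl⟩ := hu
      have := h (p : G → ℝ) p.2
      simpa [hE, PiLp.inner_apply, RCLike.inner_apply, mul_comm] using this
  -- the linear map from parameters to values on X
  let T : (V × Q) →ₗ[ℝ] EuclideanSpace ℝ (Fin n) :=
    { toFun := fun cp => WithLp.toLp 2 (fun i =>
        (∑ j, (cp.1 : EuclideanSpace ℝ (Fin n)) j * K (x i) (x j)) + (cp.2 : G → ℝ) (x i))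
      map_add' := by
        intro a b
        ext i
        simp [add_mul, Finset.sum_add_distrib]
        ring
      map_smul' := by
        intro a b
        ext i
        simp [Finset.mul_sum, mul_add, mul_assoc] }
  have hTinj : Function.Injective T := by
    rw [injective_iff_map_eq_zero]
    rintro ⟨c, p⟩ h
    have h0 : ∀ i, (∑ j, (c : EuclideanSpace ℝ (Fin n)) j * K (x i) (x j))
        + (p : G → ℝ) (x i) = 0 := fun i => congrArg (fun w => w i) h
    obtain ⟨hc0, hp0⟩ := key (c : EuclideanSpace ℝ (Fin n)) (p : G → ℝ) p.2
      ((hVmem c).1 c.2) h0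
    exact Prod.ext (Subtype.ext (by ext j; exact congrFun hc0 j)) (Subtype.ext hp0)
  have hrank : Module.finrank ℝ (V × Q) = Module.finrank ℝ (EuclideanSpace ℝ (Fin n)) := by
    have h1 : Module.finrank ℝ (LinearMap.range E) + Module.finrank ℝ V = n := by
      rw [hV]
      simpa [finrank_euclideanSpace_fin] using
        Submodule.finrank_add_finrank_orthogonal (K := LinearMap.range E)
    have h2 : Module.finrank ℝ (LinearMap.range E) = Module.finrank ℝ Q :=
      (LinearEquiv.ofInjective E hEinj).symm.finrank_eq
    rw [Module.finrank_prod, finrank_euclideanSpace_fin]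
    omega
  have hTsurj : Function.Surjective T :=
    (LinearMap.injective_iff_surjective_of_finrank_eq_finrank hrank).1 hTinj
  obtain ⟨⟨c, p⟩, hcp⟩ := hTsurj (show EuclideanSpace ℝ (Fin n) from WithLp.toLp 2 v)
  refine ⟨(fun y => ∑ j, (c : EuclideanSpace ℝ (Fin n)) j * K y (x j)) + (p : G → ℝ),
    ⟨⟨(c : EuclideanSpace ℝ (Fin n)), (p : G → ℝ), p.2, (hVmem c).1 c.2, rfl⟩,
      fun j => congrArg (fun w => w j) hcp⟩, ?_⟩
  rintro f ⟨⟨c', p', hp', hc'Q, rfl⟩, hfv⟩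
  -- uniqueness
  have hd : (fun j => c' j - (c : EuclideanSpace ℝ (Fin n)) j) = 0 ∧
      (p' - (p : G → ℝ)) = 0 := by
    refine key _ _ (Q.sub_mem hp' p.2) ?_ ?_
    · intro r hr
      have := hc'Q r hr
      have h2 := (hVmem c).1 c.2 r hr
      simp only [sub_mul, Finset.sum_sub_distrib]
      rw [this, h2, sub_zero]
    · intro i
      have h1 : (∑ j, c' j * K (x i) (x j)) + p' (x i) = v i := hfv i
      have h2 : (∑ j, (c : EuclideanSpace ℝ (Fin n)) j * K (x i) (x j))
          + (p : G → ℝ) (x i) = v i := congrArg (fun w => w i) hcp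
      simp only [sub_mul, Finset.sum_sub_distrib, Pi.sub_apply]
      linarith
  obtain ⟨hd0, hq0⟩ := hd
  have hc'eq : c' = (c : EuclideanSpace ℝ (Fin n)) := by
    funext j
    have := congrFun hd0 j
    simpa [sub_eq_zero] using this
  have hp'eq : p' = (p : G → ℝ) := by
    rw [sub_eq_zero] at hq0
    exact hq0
  rw [hc'eq, hp'eq]
end

section
/- For the method of collocation with an interpolatory overlap spline space expressed in its Lagrange basis, the collocation linear system coincides with the meshless finite difference system: the weights w_{jk} = L ℓ_{k,σ(j)}(y_j) are the unique solution of the exactness conditions Lp(y_j) = Σ_{x_i ∈ X_{σ(j)}} w_{ji} p(x_i) for all p ∈ P_{σ(j)}, and the collocation coefficient vector c equals the meshless finite difference solution vector û. -/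
open scoped Classical

/-- Collocation with an interpolatory overlap spline space in its Lagrange basis
is the meshless finite difference method: the weights w_{jk} = Lℓ_{k,σ(j)}(y_j)
are the (unique) solution of the exactness conditions
Lp(y_j) = Σ_{x_i ∈ X_{σ(j)}} w_{ji} p(x_i) for all p ∈ P_{σ(j)}, and a
coefficient vector c solves the collocation system iff it solves the meshless
finite difference system (so c = û). -/
theorem collocation_eq_meshless_fd {G : Type*} {m : ℕ} (X : Finset G)
    (Gs : Fin m → Set G) (hcover : (⋃ i, Gs i) = Set.univ)
    (P : Fin m → Submodule ℝ (G → ℝ)) [∀ i, FiniteDimensional ℝ (P i)]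
    -- the space is interpolatory: each Xᵢ = X ∩ Gᵢ is an I-set for Pᵢ
    (hunis : ∀ i, ∀ p ∈ P i, (∀ x ∈ X, x ∈ Gs i → p x = 0) → p = 0)
    (hcard : ∀ i, ((X : Set G) ∩ Gs i).ncard = Module.finrank ℝ (P i))
    -- a linear operator L for which each Gᵢ is a determining set
    (L : (G → ℝ) →ₗ[ℝ] (G → ℝ))
    (hdet : ∀ i, ∀ u v : G → ℝ, (∀ x ∈ Gs i, u x = v x) →
      ∀ x ∈ Gs i, L u x = L v x)
    -- the Lagrange basis patches: ℓ_{k,i} ∈ Pᵢ with ℓ_{k,i}(x_j) = δ_{kj}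
    (ℓ : ↥(X : Set G) → ∀ i : Fin m, G → ℝ)
    (hℓmem : ∀ k i, ℓ k i ∈ P i)
    (hℓ : ∀ (k j : ↥(X : Set G)) (i : Fin m), (j : G) ∈ Gs i →
      ℓ k i (j : G) = if k = j then 1 else 0)
    -- right-hand side, collocation nodes and patch selection
    (f : G → ℝ) (y : ↥(X : Set G) → G) (σ : ↥(X : Set G) → Fin m)
    (hy : ∀ j, y j ∈ Gs (σ j)) :
    -- the weights w_{jk} = Lℓ_{k,σ(j)}(y_j) satisfy the exactness conditions
    (∀ j : ↥(X : Set G), ∀ p ∈ P (σ j),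
      L p (y j) = ∑ k ∈ X.attach,
        (if (k : G) ∈ Gs (σ j) then L (ℓ k (σ j)) (y j) * p (k : G) else 0)) ∧
    -- and they are the unique such weights supported on X_{σ(j)}
    (∀ j : ↥(X : Set G), ∀ w : ↥(X : Set G) → ℝ,
      (∀ k : ↥(X : Set G), (k : G) ∉ Gs (σ j) → w k = 0) →
      (∀ p ∈ P (σ j), L p (y j) = ∑ k ∈ X.attach, w k * p (k : G)) →
      ∀ k : ↥(X : Set G), (k : G) ∈ Gs (σ j) → w k = L (ℓ k (σ j)) (y j)) ∧
    -- the collocation system and the meshless FD system have the same solutions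
    (∀ c : ↥(X : Set G) → ℝ,
      (∀ j : ↥(X : Set G), L (∑ k ∈ X.attach, c k • ℓ k (σ j)) (y j) = f (y j)) ↔
      (∀ j : ↥(X : Set G), ∑ k ∈ X.attach,
        (if (k : G) ∈ Gs (σ j) then L (ℓ k (σ j)) (y j) * c k else 0) = f (y j))) := by
  -- ℓ k i = 0 when (k : G) ∉ Gs i, since it vanishes on X ∩ Gs i
  have hzero : ∀ (i : Fin m) (k : ↥(X : Set G)), (k : G) ∉ Gs i → ℓ k i = 0 := by
    intro i k hk
    apply hunis i _ (hℓmem k i)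
    intro x hx hxG
    have hxX : x ∈ (X : Set G) := Finset.mem_coe.mpr hx
    rw [hℓ k ⟨x, hxX⟩ i hxG, if_neg]
    intro h
    exact hk (by rw [h]; exact hxG)
  -- every p ∈ P i equals its Lagrange expansion
  have hrep : ∀ (i : Fin m), ∀ p ∈ P i,
      p = ∑ k ∈ X.attach, p (k : G) • ℓ k i := by
    intro i p hp
    have hq : (∑ k ∈ X.attach, p (k : G) • ℓ k i) ∈ P i :=
      Submodule.sum_mem _ fun k _ => Submodule.smul_mem _ _ (hℓmem k i)
    have h0 : p - ∑ k ∈ X.attach, p (k : G) • ℓ k i = 0 := by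
      apply hunis i _ (Submodule.sub_mem _ hp hq)
      intro x hx hxG
      have hxX : x ∈ (X : Set G) := Finset.mem_coe.mpr hx
      simp only [Pi.sub_apply, Finset.sum_apply, Pi.smul_apply, smul_eq_mul]
      have hterm : ∀ k ∈ X.attach, p (k : G) * ℓ k i x
          = if k = (⟨x, hxX⟩ : ↥(X : Set G)) then p x else 0 := by
        intro k _
        rw [hℓ k ⟨x, hxX⟩ i hxG]
        split
        · next h => rw [mul_one, h]
        · rw [mul_zero]
      rw [Finset.sum_congr rfl hterm,
        Finset.sum_ite_eq' X.attach (⟨x, hxX⟩ : ↥(X : Set G)) (fun _ => p x),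
        if_pos (Finset.mem_attach _ _), sub_self]
    exact sub_eq_zero.mp h0
  -- key computation used twice
  have key : ∀ (j : ↥(X : Set G)) (c : ↥(X : Set G) → ℝ),
      L (∑ k ∈ X.attach, c k • ℓ k (σ j)) (y j)
        = ∑ k ∈ X.attach,
          (if (k : G) ∈ Gs (σ j) then L (ℓ k (σ j)) (y j) * c k else 0) := by
    intro j c
    rw [map_sum, Finset.sum_apply]
    refine Finset.sum_congr rfl fun k _ => ?_
    by_cases hk : (k : G) ∈ Gs (σ j)
    · rw [if_pos hk, map_smul]
      simp [mul_comm]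
    · rw [if_neg hk, hzero (σ j) k hk]
      simp
  refine ⟨?_, ?_, ?_⟩
  · intro j p hp
    conv_lhs => rw [hrep (σ j) p hp]
    exact key j (fun k => p (k : G))
  · intro j w hw hex k hk
    have hL := hex (ℓ k (σ j)) (hℓmem k (σ j))
    have hsum : ∑ i ∈ X.attach, w i * ℓ k (σ j) (i : G) = w k := by
      have h₀ : ∀ i ∈ X.attach, i ≠ k → w i * ℓ k (σ j) (i : G) = 0 := by
        intro i _ hik
        by_cases hiG : (i : G) ∈ Gs (σ j)
        · rw [hℓ k i (σ j) hiG, if_neg (Ne.symm hik), mul_zero]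
        · rw [hw i hiG, zero_mul]
      exact (Finset.sum_eq_single k h₀
        (fun h => absurd (Finset.mem_attach _ _) h)).trans
        (by rw [hℓ k k (σ j) hk, if_pos rfl, mul_one])
    rw [hL, hsum]
  · intro c
    constructor
    · intro h j; rw [← key j c]; exact h j
    · intro h j; rw [key j c]; exact h j
end
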